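/- arXiv:2111.14765 — 3 statements merged into one kernel-verified Lean document; each statement's English description precedes it below -/
import Mathlib

section
/- With the well-balanced interface reconstruction h^{−,*} = max(0, h⁻/φ⁻ + z⁻ − max(z⁺, z⁻))·min(φ⁺, φ⁻), under still-water conditions (u⁺ = u⁻ = 0 and h⁺/φ⁺ + z⁺ = h⁻/φ⁻ + z⁻), the modified left flux 𝓕ᴸ = 𝓕(Ũ^{−,*}, Ũ^{+,*}) + (0, (g/2)(h⁻)²/φ⁻ − (g/2)(h^{−,*})²/min(φ⁺, φ⁻)) equals the exact flux F(Ũ⁻) = (0, ½g(h⁻)²/φ⁻). -/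
theorem well_balanced_left_flux_general
    (g α : ℝ)
    (hp hm zp zm φp φm : ℝ)
    (hsw : hp / φp + zp = hm / φm + zm) :
    let φmin := min φp φm
    let hps := max 0 (hp / φp + zp - max zp zm) * φmin
    let hms := max 0 (hm / φm + zm - max zp zm) * φmin
    -- 1D porous SWE flux with porosity φmin, state (h, q):
    let F : ℝ → ℝ → ℝ × ℝ := fun h q => (q, q ^ 2 / h + (1 / 2) * g * h ^ 2 / φmin)
    -- local Lax–Friedrichs flux on the reconstructed states (velocities zero):
    let 𝓕 : ℝ × ℝ :=
      ((1 / 2) * ((F hms 0).1 + (F hps 0).1 + α * (hms - hps)),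
       (1 / 2) * ((F hms 0).2 + (F hps 0).2 + α * (0 - 0)))
    -- modified flux with corrector term:
    (𝓕.1 + 0, 𝓕.2 + ((g / 2) * hm ^ 2 / φm - (g / 2) * hms ^ 2 / φmin)) =
      (0, (1 / 2) * g * hm ^ 2 / φm) := by
  intro φmin hps hms F 𝓕
  -- Still water makes the two reconstructed heights coincide, so the Lax–Friedrichs
  -- diffusion vanishes and the corrector exchanges the reconstructed pressure for the exact one.
  have h_reconstructed_eq : hps = hms := by simp only [hps, hms, hsw]
  simp only [𝓕, F, h_reconstructed_eq, Prod.mk.injEq]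
  constructor <;> ring

/-- Well-balancedness of the modified left flux: under still-water conditions,
the reconstructed Lax–Friedrichs flux plus the corrector term equals the exact
flux `F(Ũ⁻) = (0, ½g(h⁻)²/φ⁻)`. -/
theorem well_balanced_left_flux
    (g α : ℝ) (hg : 0 < g)
    (hp hm zp zm φp φm : ℝ)
    (hφp : 0 < φp) (hφm : 0 < φm) (hhp : 0 ≤ hp) (hhm : 0 ≤ hm)
    (hsw : hp / φp + zp = hm / φm + zm) :
    let φmin := min φp φm
    let hps := max 0 (hp / φp + zp - max zp zm) * φmin
    let hms := max 0 (hm / φm + zm - max zp zm) * φmin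
    -- 1D porous SWE flux with porosity φmin, state (h, q):
    let F : ℝ → ℝ → ℝ × ℝ := fun h q => (q, q ^ 2 / h + (1 / 2) * g * h ^ 2 / φmin)
    -- local Lax–Friedrichs flux on the reconstructed states (velocities zero):
    let 𝓕 : ℝ × ℝ :=
      ((1 / 2) * ((F hms 0).1 + (F hps 0).1 + α * (hms - hps)),
       (1 / 2) * ((F hms 0).2 + (F hps 0).2 + α * (0 - 0)))
    -- modified flux with corrector term:
    (𝓕.1 + 0, 𝓕.2 + ((g / 2) * hm ^ 2 / φm - (g / 2) * hms ^ 2 / φmin)) =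
      (0, (1 / 2) * g * hm ^ 2 / φm) :=
  well_balanced_left_flux_general g α hp hm zp zm φp φm hsw
end

section
/- Under still-water conditions with equal sediment and porosity traces, the reconstructed interface heights coincide: h^{+,*} = h^{−,*}, and hence the Lax–Friedrichs flux jump penalty term α(Ũ^{+,*} − Ũ^{−,*}) vanishes. -/
theorem reconstructed_heights_eq_general
    (α : ℝ) (hp hm zp zm φp φm : ℝ)
    (hsw : hp / φp + zp = hm / φm + zm) :
    let φmin := min φp φm
    let hps := max 0 (hp / φp + zp - max zp zm) * φmin
    let hms := max 0 (hm / φm + zm - max zp zm) * φmin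
    hps = hms ∧ α • (((hps, (0 : ℝ)) : ℝ × ℝ) - (hms, 0)) = 0 := by
  intro φmin hps hms
  have heights_eq : hps = hms := by simp only [hps, hms, hsw]
  exact ⟨heights_eq, by rw [heights_eq, sub_self, smul_zero]⟩

/-- Under still-water conditions the reconstructed interface heights coincide,
`h^{+,*} = h^{−,*}`, hence the Lax–Friedrichs jump penalty
`α(Ũ^{+,*} − Ũ^{−,*})` vanishes. -/
theorem reconstructed_heights_eq
    (α : ℝ) (hp hm zp zm φp φm : ℝ)
    (hφp : 0 < φp) (hφm : 0 < φm) (hhp : 0 ≤ hp) (hhm : 0 ≤ hm)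
    (hsw : hp / φp + zp = hm / φm + zm) :
    let φmin := min φp φm
    let hps := max 0 (hp / φp + zp - max zp zm) * φmin
    let hms := max 0 (hm / φm + zm - max zp zm) * φmin
    hps = hms ∧ α • (((hps, (0 : ℝ)) : ℝ × ℝ) - (hms, 0)) = 0 :=
  reconstructed_heights_eq_general α hp hm zp zm φp φm hsw
end

section
/- In a still-water steady state of the 1D porous shallow water equations with continuous piecewise data, the cellwise DG residual R vanishes: if q_h ≡ 0, h_h/φ_h + z_h = C on the element κ = [x_{j−1/2}, x_{j+1/2}], and the numerical fluxes satisfy 𝓕ᴸ_{j+1/2} = F(Ũ_h(x⁻_{j+1/2})) and 𝓕ᴿ_{j−1/2} = F(Ũ_h(x⁺_{j−1/2})), then R = −∫_κ F(Ũ_h)·∂ₓP_h dx + 𝓕ᴸ·P_h(x⁻_{j+1/2}) − 𝓕ᴿ·P_h(x⁺_{j−1/2}) − ∫_κ S(Ũ_h)·P_h dx − ∫_κ S_φ(Ũ_h)·P_h dx = 0 for every test function P_h. -/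
/-- Cellwise DG residual in a still-water steady state of the 1D porous SWE:
with `q_h ≡ 0`, `h/φ + z = C` on the element `κ = [a, b]`, and numerical
fluxes equal to the exact flux traces, the residual
`R = −∫_κ F(Ũ)·∂ₓP + 𝓕ᴸ·P(b) − 𝓕ᴿ·P(a) − ∫_κ S(Ũ)·P − ∫_κ S_φ(Ũ)·P`
vanishes for every test function `P`. -/
theorem dg_residual_vanishes_still_water
    (g C a b : ℝ) (hab : a < b) (hg : 0 < g)
    (h φ z h' φ' z' : ℝ → ℝ)
    (hh : ∀ x, HasDerivAt h (h' x) x)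
    (hφd : ∀ x, HasDerivAt φ (φ' x) x)
    (hz : ∀ x, HasDerivAt z (z' x) x)
    (hh' : Continuous h') (hφ' : Continuous φ') (hz' : Continuous z')
    (hφpos : ∀ x ∈ Set.Icc a b, 0 < φ x)
    (hnn : ∀ x ∈ Set.Icc a b, 0 ≤ h x)
    (hsw : ∀ x ∈ Set.Icc a b, h x / φ x + z x = C)
    (P : ℝ → ℝ × ℝ) (hP : ContDiff ℝ 1 P) :
    -(∫ x in a..b,
        ((0 : ℝ) * deriv (fun t => (P t).1) x +
          (g * (h x) ^ 2 / (2 * φ x)) * deriv (fun t => (P t).2) x))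
      + ((0 : ℝ) * (P b).1 + (g * (h b) ^ 2 / (2 * φ b)) * (P b).2)
      - ((0 : ℝ) * (P a).1 + (g * (h a) ^ 2 / (2 * φ a)) * (P a).2)
      - (∫ x in a..b, ((0 : ℝ) * (P x).1 + (-(g * h x * z' x)) * (P x).2))
      - (∫ x in a..b,
          ((0 : ℝ) * (P x).1 + ((g / 2) * ((h x) ^ 2 / (φ x) ^ 2) * φ' x) * (P x).2))
      = 0 := by
  have hdh : Differentiable ℝ h := fun x => (hh x).differentiableAt
  have hdφ : Differentiable ℝ φ := fun x => (hφd x).differentiableAt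
  have hch : Continuous h := hdh.continuous
  have hcφ : Continuous φ := hdφ.continuous
  -- the derivative relation from h/φ + z = C
  have hrel : ∀ x ∈ Set.Icc a b,
      h' x * φ x - h x * φ' x + z' x * (φ x) ^ 2 = 0 := by
    have hIoo : ∀ x ∈ Set.Ioo a b,
        h' x * φ x - h x * φ' x + z' x * (φ x) ^ 2 = 0 := by
      intro x hx
      have hφx : φ x ≠ 0 := (hφpos x (Set.Ioo_subset_Icc_self hx)).ne'
      have hG : HasDerivAt (fun t => h t / φ t + z t)
          ((h' x * φ x - h x * φ' x) / (φ x) ^ 2 + z' x) x :=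
        ((hh x).div (hφd x) hφx).add (hz x)
      have hG0 : HasDerivAt (fun t => h t / φ t + z t) 0 x := by
        have hev : (fun t => h t / φ t + z t) =ᶠ[nhds x] fun _ => C := by
          filter_upwards [Ioo_mem_nhds hx.1 hx.2] with t ht
          exact hsw t (Set.Ioo_subset_Icc_self ht)
        exact (hasDerivAt_const x C).congr_of_eventuallyEq hev
      have := hG.unique hG0
      have h2 : (h' x * φ x - h x * φ' x) / (φ x) ^ 2 + z' x = 0 := this
      field_simp at h2
      linarith
    intro x hx
    have hE : Continuous fun x => h' x * φ x - h x * φ' x + z' x * (φ x) ^ 2 := by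
      continuity
    have hcl : Set.EqOn (fun x => h' x * φ x - h x * φ' x + z' x * (φ x) ^ 2)
        (fun _ => (0 : ℝ)) (closure (Set.Ioo a b)) :=
      (Set.EqOn.closure (fun t ht => hIoo t ht) hE continuous_const)
    have : x ∈ closure (Set.Ioo a b) := by
      rw [closure_Ioo hab.ne]; exact hx
    exact hcl this
  -- the flux and its derivative
  set f : ℝ → ℝ := fun x => g * (h x) ^ 2 / (2 * φ x) with hf
  set s : ℝ → ℝ := fun x =>
    -(g * h x * z' x) + (g / 2) * ((h x) ^ 2 / (φ x) ^ 2) * φ' x with hs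
  have huIcc : Set.uIcc a b = Set.Icc a b := Set.uIcc_of_le hab.le
  have hfd : ∀ x ∈ Set.uIcc a b, HasDerivAt f (s x) x := by
    intro x hx
    rw [huIcc] at hx
    have hφx : φ x ≠ 0 := (hφpos x hx).ne'
    have h2φx : (2 : ℝ) * φ x ≠ 0 := by positivity
    have hnum : HasDerivAt (fun t => g * (h t) ^ 2) (g * (2 * h x * h' x)) x :=
      (((hh x).pow 2).const_mul g).congr_deriv (by ring)
    have hden : HasDerivAt (fun t => 2 * φ t) (2 * φ' x) x := (hφd x).const_mul 2
    have hq : HasDerivAt f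
        ((g * (2 * h x * h' x) * (2 * φ x) - g * (h x) ^ 2 * (2 * φ' x)) /
          (2 * φ x) ^ 2) x := hnum.div hden h2φx
    have hrx := hrel x hx
    have heq : (g * (2 * h x * h' x) * (2 * φ x) - g * (h x) ^ 2 * (2 * φ' x)) /
        (2 * φ x) ^ 2 = s x := by
      have hhx : h' x * φ x = h x * φ' x - z' x * (φ x) ^ 2 := by linarith
      rw [hs]
      field_simp
      linear_combination (2 * h x) * hhx
    rw [heq] at hq
    exact hq
  -- the test function component
  set v : ℝ → ℝ := fun t => (P t).2 with hv
  set v' : ℝ → ℝ := fun t => (deriv P t).2 with hv'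
  have hPd : Differentiable ℝ P := hP.differentiable one_ne_zero
  have hvd : ∀ x, HasDerivAt v (v' x) x := fun x =>
    ((hPd x).hasDerivAt).snd
  have hvderiv : deriv (fun t => (P t).2) = v' := by
    funext x; exact (hvd x).deriv
  have hcv : Continuous v := continuous_snd.comp hP.continuous
  have hcv' : Continuous v' := continuous_snd.comp (hP.continuous_deriv le_rfl)
  -- integrability facts
  have hconf : ContinuousOn f (Set.uIcc a b) := by
    rw [huIcc]
    exact ((continuous_const.mul (hch.pow 2)).continuousOn).div
      ((continuous_const.mul hcφ).continuousOn)
      (fun x hx => by have := hφpos x hx; positivity)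
  have hcons : ContinuousOn s (Set.uIcc a b) := by
    rw [huIcc]
    refine ContinuousOn.add ?_ ?_
    · exact (((continuous_const.mul hch).mul hz').neg).continuousOn
    · refine ContinuousOn.mul ?_ hφ'.continuousOn
      exact continuousOn_const.mul (((hch.pow 2).continuousOn).div
        ((hcφ.pow 2).continuousOn) fun x hx => by have := hφpos x hx; positivity)
  have hint_s : IntervalIntegrable s MeasureTheory.volume a b :=
    hcons.intervalIntegrable
  have hint_v' : IntervalIntegrable v' MeasureTheory.volume a b :=
    hcv'.intervalIntegrable a b
  -- integration by parts
  have hibp : (∫ x in a..b, s x * v x + f x * v' x) = f b * v b - f a * v a :=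
    intervalIntegral.integral_deriv_mul_eq_sub hfd (fun x _ => hvd x) hint_s hint_v'
  -- split the integrals
  have hint_sv : IntervalIntegrable (fun x => s x * v x) MeasureTheory.volume a b :=
    (hcons.mul hcv.continuousOn).intervalIntegrable
  have hint_fv' : IntervalIntegrable (fun x => f x * v' x) MeasureTheory.volume a b :=
    (hconf.mul hcv'.continuousOn).intervalIntegrable
  have hsplit : (∫ x in a..b, s x * v x + f x * v' x)
      = (∫ x in a..b, s x * v x) + ∫ x in a..b, f x * v' x :=
    intervalIntegral.integral_add hint_sv hint_fv'
  have hint1 : IntervalIntegrable (fun x => -(g * h x * z' x) * v x)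
      MeasureTheory.volume a b :=
    ((((continuous_const.mul hch).mul hz').neg).mul hcv).intervalIntegrable a b
  have hint2 : IntervalIntegrable
      (fun x => (g / 2) * ((h x) ^ 2 / (φ x) ^ 2) * φ' x * v x)
      MeasureTheory.volume a b := by
    refine ContinuousOn.intervalIntegrable ?_
    rw [huIcc]
    refine ContinuousOn.mul (ContinuousOn.mul ?_ hφ'.continuousOn) hcv.continuousOn
    exact continuousOn_const.mul (((hch.pow 2).continuousOn).div
      ((hcφ.pow 2).continuousOn) fun x hx => by have := hφpos x hx; positivity)
  have hsv : (∫ x in a..b, s x * v x)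
      = (∫ x in a..b, -(g * h x * z' x) * v x)
        + ∫ x in a..b, (g / 2) * ((h x) ^ 2 / (φ x) ^ 2) * φ' x * v x := by
    rw [← intervalIntegral.integral_add hint1 hint2]
    apply intervalIntegral.integral_congr
    intro x _
    simp only [hs]
    ring
  -- assemble
  simp only [zero_mul, zero_add, hvderiv, show deriv v = v' from hvderiv]
  have hb : f b * v b = g * (h b) ^ 2 / (2 * φ b) * (P b).2 := rfl
  have ha : f a * v a = g * (h a) ^ 2 / (2 * φ a) * (P a).2 := rfl
  have e1 : (∫ x in a..b, g * (h x) ^ 2 / (2 * φ x) * v' x)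
      = ∫ x in a..b, f x * v' x := rfl
  have e2 : (∫ x in a..b, -(g * h x * z' x) * (P x).2)
      = ∫ x in a..b, -(g * h x * z' x) * v x := rfl
  have e3 : (∫ x in a..b, (g / 2) * ((h x) ^ 2 / (φ x) ^ 2) * φ' x * (P x).2)
      = ∫ x in a..b, (g / 2) * ((h x) ^ 2 / (φ x) ^ 2) * φ' x * v x := rfl
  rw [e1, e2, e3, ← hb, ← ha]
  rw [hsplit, hsv] at hibp
  linarith
end
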